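/- arXiv:1609.03307 — 4 statements merged into one kernel-verified Lean document; each statement's English description precedes it below -/
import Mathlib

section
/- Let C₂ > 0 and let ζ : ℝ × ℝ → ℝ be a continuous function such that ζ(x,y) < (x − y)^{-1} whenever x > y. Then there exists l₀ > 0 such that for every l ≥ l₀ and every (x,y) ∈ [−C₂, C₂] × [−C₂, C₂] one has ζ(x,y) ≤ lΨ(lx, ly). -/
/-!
Write `t = x - y`. For `t ≤ 0` one has `l Ψ(l x, l y) ≥ l`, which beats the bound `M` of `ζ` on
the compact square once `l ≥ 2M`. For `t > 0` one has `l Ψ(l x, l y) = (1 - e^{-l t}) / t`, so the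
claim reads `t ζ(x, y) ≤ 1 - e^{-l t}`. For small `t` the left side is at most `M t`, while
`1 - e^{-s} ≥ s / (1 + s)` makes the right side of order `min(l t, 1)`. For `t` bounded away
from `0` the hypothesis gives `t ζ < 1` on a compact set, hence `t ζ ≤ 1 - δ` for some `δ > 0`,
and `e^{-l t} ≤ δ` for `l` large.
-/

/-- `Ψ(x, y) = (e^(y-x) - 1)/(y - x)` for `x ≠ y`, and `Ψ(x, x) = 1`. -/
noncomputable def Psi (x y : ℝ) : ℝ :=
  if x = y then 1 else (Real.exp (y - x) - 1) / (y - x)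

open Filter Set

theorem one_le_Psi_of_le {x y : ℝ} (h : x ≤ y) : 1 ≤ Psi x y := by
  rcases h.eq_or_lt with rfl | hlt
  · simp [Psi]
  · have hs : 0 < y - x := sub_pos.2 hlt
    rw [Psi, if_neg hlt.ne, le_div_iff₀ hs]
    linarith [Real.add_one_le_exp (y - x)]

theorem le_mul_Psi_mul_of_le {l x y : ℝ} (hl : 0 ≤ l) (h : x ≤ y) :
    l ≤ l * Psi (l * x) (l * y) :=
  le_mul_of_one_le_right hl (one_le_Psi_of_le (mul_le_mul_of_nonneg_left h hl))

theorem mul_Psi_mul_of_lt {l x y : ℝ} (hl : 0 < l) (h : y < x) :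
    l * Psi (l * x) (l * y) = (1 - Real.exp (-(l * (x - y)))) / (x - y) := by
  have hne : l * x ≠ l * y := (mul_lt_mul_of_pos_left h hl).ne'
  have ht : x - y ≠ 0 := sub_ne_zero.2 h.ne'
  have hyx : y - x ≠ 0 := sub_ne_zero.2 h.ne
  rw [Psi, if_neg hne, show l * y - l * x = -(l * (x - y)) by ring]
  field_simp
  ring

theorem div_one_add_le_one_sub_exp_neg {s : ℝ} (hs : 0 ≤ s) :
    s / (1 + s) ≤ 1 - Real.exp (-s) := by
  have hexp : Real.exp (-s) ≤ (1 + s)⁻¹ := by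
    rw [Real.exp_neg]
    exact inv_anti₀ (by positivity) (by linarith [Real.add_one_le_exp s])
  have : s / (1 + s) = 1 - (1 + s)⁻¹ := by field_simp; ring
  linarith

theorem mul_le_one_sub_exp_neg_mul {M l t : ℝ} (hM : 0 < M) (ht : 0 < t) (hl : 2 * M ≤ l)
    (htM : t ≤ (2 * M)⁻¹) : M * t ≤ 1 - Real.exp (-(l * t)) := by
  have hMt : 2 * M * t ≤ 1 := by
    have := mul_le_mul_of_nonneg_left htM (by positivity : (0 : ℝ) ≤ 2 * M)
    rwa [mul_inv_cancel₀ (by positivity)] at this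
  have hlt : 0 < l * t := mul_pos (by linarith) ht
  refine le_trans ?_ (div_one_add_le_one_sub_exp_neg hlt.le)
  rw [le_div_iff₀ (by positivity)]
  nlinarith [mul_le_mul_of_nonneg_right hMt hlt.le]

theorem eventually_forall_le_mul_Psi {K : Set (ℝ × ℝ)} (hK : IsCompact K) {ζ : ℝ × ℝ → ℝ}
    (hζ : ContinuousOn ζ K) (hζlt : ∀ p ∈ K, p.2 < p.1 → ζ p < (p.1 - p.2)⁻¹) :
    ∀ᶠ l in atTop, ∀ p ∈ K, ζ p ≤ l * Psi (l * p.1) (l * p.2) := by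
  obtain ⟨M, hMpos, hM⟩ : ∃ M > 0, ∀ p ∈ K, ζ p ≤ M := by
    obtain ⟨M, hM⟩ := hK.bddAbove_image hζ
    exact ⟨max M 1, by positivity, fun p hp => (hM (mem_image_of_mem ζ hp)).trans (le_max_left _ _)⟩
  set ε := (2 * M)⁻¹
  have hε : 0 < ε := by positivity
  obtain ⟨δ, hδpos, hδ⟩ : ∃ δ > 0, ∀ p ∈ K ∩ {p | ε ≤ p.1 - p.2}, δ ≤ 1 - (p.1 - p.2) * ζ p := by
    refine (hK.inter_right (isClosed_le continuous_const (continuous_fst.sub continuous_snd))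
      ).exists_forall_le' ?_ fun p ⟨hp, hεp⟩ => ?_
    · exact continuousOn_const.sub (((continuous_fst.sub continuous_snd).continuousOn).mul
        (hζ.mono inter_subset_left))
    · have ht : 0 < p.1 - p.2 := hε.trans_le hεp
      have := mul_lt_mul_of_pos_left (hζlt p hp (sub_pos.1 ht)) ht
      rw [mul_inv_cancel₀ ht.ne'] at this
      linarith
  have hexp : ∀ᶠ l in atTop, Real.exp (-(l * ε)) < δ :=
    (Real.tendsto_exp_neg_atTop_nhds_zero.comp (tendsto_id.atTop_mul_const hε)).eventually_lt_const
      hδpos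
  filter_upwards [eventually_ge_atTop (2 * M), hexp] with l hl hlδ p hp
  have hl0 : 0 < l := by linarith
  rcases le_or_gt p.1 p.2 with hle | hlt
  · exact ((hM p hp).trans (by linarith)).trans (le_mul_Psi_mul_of_le hl0.le hle)
  have ht : 0 < p.1 - p.2 := sub_pos.2 hlt
  rw [mul_Psi_mul_of_lt hl0 hlt, le_div_iff₀ ht]
  rcases le_or_gt (p.1 - p.2) ε with hsmall | hlarge
  · calc ζ p * (p.1 - p.2) ≤ M * (p.1 - p.2) := mul_le_mul_of_nonneg_right (hM p hp) ht.le
      _ ≤ _ := mul_le_one_sub_exp_neg_mul hMpos ht hl hsmall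
  · have hgap := hδ p ⟨hp, hlarge.le⟩
    have : Real.exp (-(l * (p.1 - p.2))) ≤ Real.exp (-(l * ε)) :=
      Real.exp_le_exp.2 (neg_le_neg (mul_le_mul_of_nonneg_left hlarge.le hl0.le))
    linarith

theorem zeta_le_lPsi_of_lt_inv_general (C₂ : ℝ) (ζ : ℝ × ℝ → ℝ)
    (hζ : Continuous ζ) (hζlt : ∀ x y : ℝ, x > y → ζ (x, y) < (x - y)⁻¹) :
    ∃ l₀ : ℝ, 0 < l₀ ∧ ∀ l ≥ l₀, ∀ x ∈ Set.Icc (-C₂) C₂, ∀ y ∈ Set.Icc (-C₂) C₂,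
      ζ (x, y) ≤ l * Psi (l * x) (l * y) := by
  obtain ⟨l₀, hl₀⟩ := eventually_atTop.1 <|
    eventually_forall_le_mul_Psi (isCompact_Icc.prod isCompact_Icc) hζ.continuousOn
      fun p _ h => hζlt p.1 p.2 h
  exact ⟨max l₀ 1, by positivity, fun l hl x hx y hy =>
    hl₀ l (le_of_max_le_left hl) (x, y) ⟨hx, hy⟩⟩

/-- if `C₂ > 0` and `ζ : ℝ × ℝ → ℝ` is continuous with
`ζ(x, y) < (x - y)⁻¹` whenever `x > y`, then there exists `l₀ > 0` such that for
every `l ≥ l₀` and every `(x, y) ∈ [-C₂, C₂] × [-C₂, C₂]` one has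
`ζ(x, y) ≤ l·Ψ(l·x, l·y)`. -/
theorem zeta_le_lPsi_of_lt_inv (C₂ : ℝ) (hC₂ : 0 < C₂) (ζ : ℝ × ℝ → ℝ)
    (hζ : Continuous ζ) (hζlt : ∀ x y : ℝ, x > y → ζ (x, y) < (x - y)⁻¹) :
    ∃ l₀ : ℝ, 0 < l₀ ∧ ∀ l ≥ l₀, ∀ x ∈ Set.Icc (-C₂) C₂, ∀ y ∈ Set.Icc (-C₂) C₂,
      ζ (x, y) ≤ l * Psi (l * x) (l * y) :=
  zeta_le_lPsi_of_lt_inv_general C₂ ζ hζ hζlt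
end

section
/- Let φ be an n × n complex matrix and let s be a Hermitian n × n complex matrix. Then the function ζ(t) = Tr([φ, exp(−ts)·φ*·exp(ts)]·s) is real-valued and differentiable on ℝ, and for every t ∈ ℝ its derivative equals ζ'(t) = ‖[s, exp(ts/2)·φ·exp(−ts/2)]‖_F²; in particular ζ is nondecreasing on ℝ. -/
/-!
Put `ψ = exp(t s/2) φ exp(-t s/2)`. Conjugation by `exp(-t s/2)` is a ring automorphism fixing
`s`; it sends `ψ` to `φ` and, because `s` is Hermitian, `ψᴴ` to `m = exp(-t s) φᴴ exp(t s)`.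
Since it also preserves `X ↦ Tr (X s)`, we get `ζ(t) = Tr ([ψ, ψᴴ] s)`, which is real as the
trace of a product of two Hermitian matrices. Differentiating gives `m' = [m, s]`, so
`ζ'(t) = Tr ([φ, [m, s]] s) = Tr ([ψ, [ψᴴ, s]] s)`, and the invariance
`Tr ([A, C] s) = Tr ([s, A] C)` of the trace form turns this into
`Tr ([s, ψ] [s, ψ]ᴴ) = ‖[s, ψ]‖_F² ≥ 0`.
-/

open Matrix

/-- The squared Frobenius norm of a complex matrix, associated with the Frobenius
inner product `⟨A, B⟩ = Tr (A Bᴴ)`, i.e. `‖A‖_F² = Re (Tr (A Aᴴ))`. -/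
noncomputable def frobSq {n : ℕ} (A : Matrix (Fin n) (Fin n) ℂ) : ℝ :=
  ((A * Aᴴ).trace).re

open NormedSpace ConjAct ComplexOrder

section Trace

variable {m R : Type*} [Fintype m] [CommRing R]

theorem Matrix.trace_commutator_mul (A C s : Matrix m m R) :
    trace ((A * C - C * A) * s) = trace ((s * A - A * s) * C) := by
  simp only [sub_mul, trace_sub, mul_assoc]
  rw [trace_mul_cycle', trace_mul_comm C]
  simp only [mul_assoc]

theorem Matrix.trace_conjAct_smul_mul [DecidableEq m] {c : ConjAct (Matrix m m R)ˣ}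
    {s : Matrix m m R} (hc : c • s = s) (X : Matrix m m R) :
    trace ((c • X) * s) = trace (X * s) := by
  rw [← hc, ← smul_mul', units_smul_def, hc, trace_units_conj]

end Trace

variable {m : Type*} [Fintype m]

theorem Matrix.IsHermitian.im_trace_mul_eq_zero {A B : Matrix m m ℂ} (hA : A.IsHermitian)
    (hB : B.IsHermitian) : (trace (A * B)).im = 0 := by
  rw [← Complex.conj_eq_iff_im, ← Complex.star_def, ← trace_conjTranspose, conjTranspose_mul,
    hA.eq, hB.eq, trace_mul_comm]

theorem Matrix.zero_le_trace_mul_conjTranspose_self (A : Matrix m m ℂ) : 0 ≤ trace (A * Aᴴ) :=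
  (posSemidef_self_mul_conjTranspose A).trace_nonneg

theorem trace_mul_conjTranspose_self_eq_frobSq {n : ℕ} (A : Matrix (Fin n) (Fin n) ℂ) :
    trace (A * Aᴴ) = frobSq A :=
  Complex.ext rfl (Complex.nonneg_iff.mp (zero_le_trace_mul_conjTranspose_self A)).2.symm

theorem frobSq_nonneg {n : ℕ} (A : Matrix (Fin n) (Fin n) ℂ) : 0 ≤ frobSq A :=
  (Complex.nonneg_iff.mp (zero_le_trace_mul_conjTranspose_self A)).1

theorem monotone_re_of_hasDerivAt {f : ℝ → ℂ} {f' : ℝ → ℝ}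
    (hf : ∀ t, HasDerivAt f (f' t) t) (hf' : ∀ t, 0 ≤ f' t) : Monotone fun t => (f t).re := by
  have hre (t : ℝ) : HasDerivAt (fun t => (f t).re) (f' t) t := by
    simpa [Function.comp_def] using Complex.reCLM.hasFDerivAt.comp_hasDerivAt t (hf t)
  exact monotone_of_deriv_nonneg (fun t => (hre t).differentiableAt)
    fun t => (hre t).deriv ▸ hf' t

variable [DecidableEq m]

section Exp

variable {𝕂 : Type*} [RCLike 𝕂]

theorem Matrix.exp_smul_mul_exp_smul (s : Matrix m m 𝕂) (a b : 𝕂) :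
    exp (a • s) * exp (b • s) = exp ((a + b) • s) := by
  rw [add_smul, Matrix.exp_add_of_commute]
  exact ((Commute.refl s).smul_left a).smul_right b

theorem Matrix.commute_exp_smul (s : Matrix m m 𝕂) (a : 𝕂) : Commute s (exp (a • s)) :=
  ((Commute.refl s).smul_right a).exp_right

@[simps]
noncomputable def Matrix.expSMulUnit (s : Matrix m m 𝕂) (a : 𝕂) : (Matrix m m 𝕂)ˣ where
  val := exp (a • s)
  inv := exp ((-a) • s)
  val_inv := by rw [exp_smul_mul_exp_smul, add_neg_cancel, zero_smul, exp_zero]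
  inv_val := by rw [exp_smul_mul_exp_smul, neg_add_cancel, zero_smul, exp_zero]

theorem Matrix.IsHermitian.conjTranspose_exp_smul {s : Matrix m m 𝕂} (hs : s.IsHermitian)
    (a : 𝕂) : (NormedSpace.exp (a • s))ᴴ = NormedSpace.exp (star a • s) := by
  rw [← exp_conjTranspose, conjTranspose_smul, hs.eq]

end Exp

noncomputable def conjExp (s : Matrix m m ℂ) (a : ℂ) (X : Matrix m m ℂ) : Matrix m m ℂ :=
  exp (a • s) * X * exp ((-a) • s)

noncomputable def traceCommExpConj (s φ : Matrix m m ℂ) (t : ℝ) : ℂ :=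
  trace ((φ * (exp ((-(t : ℂ)) • s) * φᴴ * exp ((t : ℂ) • s))
    - (exp ((-(t : ℂ)) • s) * φᴴ * exp ((t : ℂ) • s)) * φ) * s)

section Deriv

-- Every matrix norm induces the entrywise topology; this one only serves to state derivatives.
attribute [local instance] Matrix.linftyOpNormedRing Matrix.linftyOpNormedAlgebra

theorem Matrix.hasDerivAt_exp_ofReal_smul (s : Matrix m m ℂ) (t : ℝ) :
    HasDerivAt (fun t : ℝ => exp ((t : ℂ) • s)) (s * exp ((t : ℂ) • s)) t := by
  have h := hasDerivAt_exp_smul_const' s t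
  simp only [← Complex.coe_smul] at h
  exact h

theorem Matrix.hasDerivAt_exp_neg_smul_mul_mul_exp_smul (s X : Matrix m m ℂ) (t : ℝ) :
    HasDerivAt (fun t : ℝ => exp ((-(t : ℂ)) • s) * X * exp ((t : ℂ) • s))
      (exp ((-(t : ℂ)) • s) * X * exp ((t : ℂ) • s) * s
        - s * (exp ((-(t : ℂ)) • s) * X * exp ((t : ℂ) • s))) t := by
  have hneg := hasDerivAt_exp_ofReal_smul (-s) t
  simp only [smul_neg, ← neg_smul] at hneg
  have hderiv : exp ((-(t : ℂ)) • s) * X * exp ((t : ℂ) • s) * s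
      - s * (exp ((-(t : ℂ)) • s) * X * exp ((t : ℂ) • s))
      = -s * exp ((-(t : ℂ)) • s) * X * exp ((t : ℂ) • s)
        + exp ((-(t : ℂ)) • s) * X * (s * exp ((t : ℂ) • s)) := by
    rw [(commute_exp_smul s _).eq]
    noncomm_ring
  rw [hderiv]
  exact (hneg.mul_const X).mul (hasDerivAt_exp_ofReal_smul s t)

theorem Matrix.hasDerivAt_trace_commutator_mul {f : ℝ → Matrix m m ℂ} {f' : Matrix m m ℂ}
    {t : ℝ} (hf : HasDerivAt f f' t) (φ s : Matrix m m ℂ) :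
    HasDerivAt (fun t => trace ((φ * f t - f t * φ) * s)) (trace ((φ * f' - f' * φ) * s)) t :=
  (traceLinearMap m ℝ ℂ).toContinuousLinearMap.hasFDerivAt.comp_hasDerivAt t
    (((hf.const_mul φ).sub (hf.mul_const φ)).mul_const s)

end Deriv

variable {s : Matrix m m ℂ}

theorem exists_conjAct_exp_smul_of_isHermitian (hs : s.IsHermitian) (φ : Matrix m m ℂ) (t : ℝ) :
    ∃ c : ConjAct (Matrix m m ℂ)ˣ, c • s = s ∧
      c • conjExp s ((t : ℂ) / 2) φ = φ ∧ c • (conjExp s ((t : ℂ) / 2) φ)ᴴ =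
        exp ((-(t : ℂ)) • s) * φᴴ * exp ((t : ℂ) • s) := by
  set u := expSMulUnit s ((t : ℂ) / 2)
  have hstar : star ((t : ℂ) / 2) = (t : ℂ) / 2 := by simp [Complex.conj_ofReal]
  refine ⟨(toConjAct u)⁻¹, ?_, inv_smul_smul (toConjAct u) φ, ?_⟩
  · have hsu : Commute s u := commute_exp_smul s _
    rw [inv_smul_eq_iff, units_smul_def, ofConjAct_toConjAct, ← hsu.eq, mul_assoc, Units.mul_inv,
      mul_one]
  · rw [conjExp, conjTranspose_mul, conjTranspose_mul, hs.conjTranspose_exp_smul,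
      hs.conjTranspose_exp_smul, star_neg, hstar, units_smul_def]
    simp only [ofConjAct_inv, ofConjAct_toConjAct, inv_inv, u, val_expSMulUnit,
      val_inv_expSMulUnit]
    rw [← mul_assoc, exp_smul_mul_exp_smul, mul_assoc, mul_assoc, exp_smul_mul_exp_smul,
      add_halves, ← neg_add, add_halves, mul_assoc]

theorem traceCommExpConj_eq (hs : s.IsHermitian) (φ : Matrix m m ℂ) (t : ℝ) :
    traceCommExpConj s φ t =
      trace ((conjExp s ((t : ℂ) / 2) φ * (conjExp s ((t : ℂ) / 2) φ)ᴴ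
        - (conjExp s ((t : ℂ) / 2) φ)ᴴ * conjExp s ((t : ℂ) / 2) φ) * s) := by
  obtain ⟨c, hcs, hcψ, hcψH⟩ := exists_conjAct_exp_smul_of_isHermitian hs φ t
  rw [← trace_conjAct_smul_mul hcs, smul_sub, smul_mul', smul_mul', hcψ, hcψH]
  rfl

theorem im_traceCommExpConj (hs : s.IsHermitian) (φ : Matrix m m ℂ) (t : ℝ) :
    (traceCommExpConj s φ t).im = 0 := by
  rw [traceCommExpConj_eq hs]
  exact ((isHermitian_mul_conjTranspose_self _).sub (isHermitian_conjTranspose_mul_self _))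
    |>.im_trace_mul_eq_zero hs

theorem hasDerivAt_traceCommExpConj (hs : s.IsHermitian) (φ : Matrix m m ℂ) (t : ℝ) :
    HasDerivAt (traceCommExpConj s φ)
      (trace ((s * conjExp s ((t : ℂ) / 2) φ - conjExp s ((t : ℂ) / 2) φ * s)
        * (s * conjExp s ((t : ℂ) / 2) φ - conjExp s ((t : ℂ) / 2) φ * s)ᴴ)) t := by
  obtain ⟨c, hcs, hcψ, hcψH⟩ := exists_conjAct_exp_smul_of_isHermitian hs φ t
  set ψ := conjExp s ((t : ℂ) / 2) φ
  have hcomm : (s * ψ - ψ * s)ᴴ = ψᴴ * s - s * ψᴴ := by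
    simp only [conjTranspose_sub, conjTranspose_mul, hs.eq]
  rw [hcomm, ← trace_commutator_mul, ← trace_conjAct_smul_mul hcs]
  simp only [smul_sub, smul_mul', hcs, hcψ, hcψH]
  exact hasDerivAt_trace_commutator_mul (hasDerivAt_exp_neg_smul_mul_mul_exp_smul s φᴴ t) φ s

/-- let `φ` be an `n × n` complex matrix and let `s` be a Hermitian
`n × n` complex matrix. Then the function
`ζ(t) = Tr([φ, exp(-t·s)·φᴴ·exp(t·s)]·s)` is real-valued and differentiable on `ℝ`,
for every `t` its derivative equals `‖[s, exp(t·s/2)·φ·exp(-t·s/2)]‖_F²`, and in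
particular `ζ` is nondecreasing on `ℝ` (as a real-valued function). -/
theorem trace_comm_exp_real_differentiable_deriv_monotone {n : ℕ}
    (φ s : Matrix (Fin n) (Fin n) ℂ) (hs : s.IsHermitian) :
    (∀ t : ℝ,
      (((φ * (NormedSpace.exp ((-(t : ℂ)) • s) * φᴴ * NormedSpace.exp ((t : ℂ) • s))
          - (NormedSpace.exp ((-(t : ℂ)) • s) * φᴴ * NormedSpace.exp ((t : ℂ) • s)) * φ)
          * s).trace).im = 0) ∧
    Differentiable ℝ (fun t : ℝ =>
      ((φ * (NormedSpace.exp ((-(t : ℂ)) • s) * φᴴ * NormedSpace.exp ((t : ℂ) • s))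
          - (NormedSpace.exp ((-(t : ℂ)) • s) * φᴴ * NormedSpace.exp ((t : ℂ) • s)) * φ)
          * s).trace) ∧
    (∀ t : ℝ,
      deriv (fun t : ℝ =>
        ((φ * (NormedSpace.exp ((-(t : ℂ)) • s) * φᴴ * NormedSpace.exp ((t : ℂ) • s))
            - (NormedSpace.exp ((-(t : ℂ)) • s) * φᴴ * NormedSpace.exp ((t : ℂ) • s)) * φ)
            * s).trace) t =
        (frobSq (s * (NormedSpace.exp (((t : ℂ) / 2) • s) * φ *
            NormedSpace.exp ((-((t : ℂ) / 2)) • s)) -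
          (NormedSpace.exp (((t : ℂ) / 2) • s) * φ *
            NormedSpace.exp ((-((t : ℂ) / 2)) • s)) * s) : ℝ)) ∧
    Monotone (fun t : ℝ =>
      (((φ * (NormedSpace.exp ((-(t : ℂ)) • s) * φᴴ * NormedSpace.exp ((t : ℂ) • s))
          - (NormedSpace.exp ((-(t : ℂ)) • s) * φᴴ * NormedSpace.exp ((t : ℂ) • s)) * φ)
          * s).trace).re) := by
  have hderiv (t : ℝ) : HasDerivAt (traceCommExpConj s φ)
      (frobSq (s * conjExp s ((t : ℂ) / 2) φ - conjExp s ((t : ℂ) / 2) φ * s)) t := by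
    rw [← trace_mul_conjTranspose_self_eq_frobSq]
    exact hasDerivAt_traceCommExpConj hs φ t
  exact ⟨im_traceCommExpConj hs φ, fun t => (hderiv t).differentiableAt,
    fun t => (hderiv t).deriv, monotone_re_of_hasDerivAt hderiv fun t => frobSq_nonneg _⟩
end

section
/- Let φ be an n × n complex matrix and let s be a Hermitian n × n complex matrix. Then Tr([φ, exp(−s)·φ*·exp(s) − φ*]·s) is a nonnegative real number. -/
/-!
Diagonalize `s = U diag(a) U*` with `U` unitary. The trace is invariant under simultaneous
conjugation of `φ` and `s` by `U`, and for `ψ = U* φ U` it equals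
`∑ i j, |ψ j i|² (a j - a i) (exp (a j - a i) - 1)`, a sum of nonnegative reals because
`x (eˣ - 1) ≥ 0` for every real `x`.
-/

open Matrix

theorem Real.mul_exp_sub_one_nonneg (x : ℝ) : 0 ≤ x * (Real.exp x - 1) := by
  rcases le_total 0 x with hx | hx
  · exact mul_nonneg hx (by linarith [Real.add_one_le_exp x])
  · exact mul_nonneg_of_nonpos_of_nonpos hx (by linarith [Real.exp_le_one_iff.mpr hx])

namespace Matrix

open NormedSpace Unitary

variable {m : Type*} [Fintype m] [DecidableEq m]

theorem trace_conjStarAlgAut {R : Type*} [CommSemiring R] [StarRing R]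
    (u : unitary (Matrix m m R)) (A : Matrix m m R) :
    (conjStarAlgAut R _ u A).trace = A.trace := by
  rw [conjStarAlgAut_apply, trace_mul_cycle, coe_star_mul_self, one_mul]

theorem exp_conjStarAlgAut {𝕜 : Type*} [RCLike 𝕜] (u : unitary (Matrix m m 𝕜))
    (A : Matrix m m 𝕜) :
    exp (conjStarAlgAut 𝕜 _ u A) = conjStarAlgAut 𝕜 _ u (exp A) := by
  have hinv : (u : Matrix m m 𝕜)⁻¹ = star u := inv_eq_left_inv (coe_star_mul_self u)
  simpa only [conjStarAlgAut_apply, hinv, coe_star] using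
    exp_conj (u : Matrix m m 𝕜) A isUnit_coe

noncomputable def twistedCommutatorTrace (φ s : Matrix m m ℂ) : ℂ :=
  (⁅φ, exp (-s) * φᴴ * exp s - φᴴ⁆ * s).trace

theorem twistedCommutatorTrace_conjStarAlgAut (u : unitary (Matrix m m ℂ))
    (φ s : Matrix m m ℂ) :
    twistedCommutatorTrace (conjStarAlgAut ℂ _ u φ) (conjStarAlgAut ℂ _ u s) =
      twistedCommutatorTrace φ s := by
  conv_rhs => rw [twistedCommutatorTrace, ← trace_conjStarAlgAut u]
  rw [twistedCommutatorTrace]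
  simp only [Ring.lie_def, ← star_eq_conjTranspose, map_mul, map_sub, map_neg, map_star,
    ← exp_conjStarAlgAut]

theorem twistedCommutatorTrace_diagonal (ψ : Matrix m m ℂ) (a : m → ℝ) :
    twistedCommutatorTrace ψ (diagonal ((↑) ∘ a)) =
      ((∑ i, ∑ j, Complex.normSq (ψ j i) *
        ((a j - a i) * (Real.exp (a j - a i) - 1)) : ℝ) : ℂ) := by
  set D : Matrix m m ℂ := diagonal ((↑) ∘ a)
  set B := exp (-D) * ψᴴ * exp D - ψᴴ
  have hB : ∀ i j, B i j = (Complex.exp (a j - a i) - 1) * star (ψ j i) := by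
    intro i j
    simp only [B, D, sub_apply, diagonal_neg, exp_diagonal, mul_diagonal, diagonal_mul,
      Pi.exp_def, Function.comp_apply, conjTranspose_apply, ← Complex.exp_eq_exp_ℂ]
    rw [Complex.exp_sub, Complex.exp_neg]
    ring
  have hC : ∀ i j, (D * ψ - ψ * D) j i = (a j - a i) * ψ j i := by
    intro i j
    simp only [D, sub_apply, mul_diagonal, diagonal_mul, Function.comp_apply]
    ring
  have hcomm : (⁅ψ, B⁆ * D).trace = (B * (D * ψ - ψ * D)).trace := by
    simp only [Ring.lie_def, sub_mul, mul_sub, trace_sub, mul_assoc, trace_mul_comm ψ (B * D)]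
  rw [twistedCommutatorTrace, hcomm]
  simp only [trace, diag_apply, mul_apply]
  push_cast
  refine Finset.sum_congr rfl fun i _ => Finset.sum_congr rfl fun j _ => ?_
  rw [hB, hC, Complex.normSq_eq_conj_mul_self, Complex.star_def]
  ring

open ComplexOrder in
theorem twistedCommutatorTrace_nonneg (φ : Matrix m m ℂ) {s : Matrix m m ℂ}
    (hs : s.IsHermitian) : 0 ≤ twistedCommutatorTrace φ s := by
  set f := conjStarAlgAut ℂ _ hs.eigenvectorUnitary
  calc (0 : ℂ)
      ≤ ((∑ i, ∑ j, Complex.normSq ((f.symm φ) j i) *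
          ((hs.eigenvalues j - hs.eigenvalues i) *
            (Real.exp (hs.eigenvalues j - hs.eigenvalues i) - 1)) : ℝ) : ℂ) :=
        Complex.zero_le_real.mpr <| Finset.sum_nonneg fun i _ => Finset.sum_nonneg fun j _ =>
          mul_nonneg (Complex.normSq_nonneg _) (Real.mul_exp_sub_one_nonneg _)
    _ = twistedCommutatorTrace (f (f.symm φ)) (f (diagonal ((↑) ∘ hs.eigenvalues))) := by
        rw [twistedCommutatorTrace_conjStarAlgAut, twistedCommutatorTrace_diagonal]
    _ = twistedCommutatorTrace φ s := by
        rw [f.apply_symm_apply]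
        exact congrArg _ hs.spectral_theorem.symm

end Matrix

/-- let `φ` be an `n × n` complex matrix and let `s` be a Hermitian
`n × n` complex matrix. Then `Tr([φ, exp(-s)·φᴴ·exp(s) - φᴴ]·s)` is a nonnegative
real number. -/
theorem trace_comm_exp_sub_nonneg_real {n : ℕ}
    (φ s : Matrix (Fin n) (Fin n) ℂ) (hs : s.IsHermitian) :
    (((φ * (NormedSpace.exp (-s) * φᴴ * NormedSpace.exp s - φᴴ)
        - (NormedSpace.exp (-s) * φᴴ * NormedSpace.exp s - φᴴ) * φ) * s).trace).im = 0 ∧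
    0 ≤ (((φ * (NormedSpace.exp (-s) * φᴴ * NormedSpace.exp s - φᴴ)
        - (NormedSpace.exp (-s) * φᴴ * NormedSpace.exp s - φᴴ) * φ) * s).trace).re := by
  obtain ⟨hre, him⟩ := Complex.nonneg_iff.mp (twistedCommutatorTrace_nonneg φ hs)
  exact ⟨him.symm, hre⟩
end

section
/- Let λ₁, …, λ_n be real numbers and let s = diag(λ₁, …, λ_n) ∈ M_n(ℂ). Then the matrix exponential exp : M_n(ℂ) → M_n(ℂ) is Fréchet differentiable at s, and its derivative at s applied to a direction h ∈ M_n(ℂ) is the matrix whose (a,b)-entry equals h_{ab} · (e^{λ_a} − e^{λ_b})/(λ_a − λ_b) when λ_a ≠ λ_b, and equals e^{λ_a} · h_{ab} when λ_a = λ_b. -/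
/-!
Differentiate `exp x = ∑ₖ xᵏ / k!` term by term: the derivative of `y ↦ yᵏ` at `x` is
`h ↦ ∑_{i<k} xⁱ h x^(k-1-i)`, and on every ball these derivatives are bounded by the terms of
a convergent series. At `x = diagonal d` the `(a, b)` entry of `xⁱ h x^(k-1-i)` is
`d aⁱ * d b^(k-1-i) * h a b`, so the derivative multiplies `h` entrywise by
`∑ₖ (1/k!) ∑_{i<k} d aⁱ d b^(k-1-i)`, the divided difference `dslope exp (d b) (d a)` of the
scalar exponential: `(e^(d a) - e^(d b)) / (d a - d b)`, or `e^(d a)` when `d a = d b`.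
-/

open Finset NormedSpace ContinuousLinearMap
open scoped Nat

theorem norm_pow_le_max_norm_one_mul {A : Type*} [NormedRing A] (x : A) (i : ℕ) :
    ‖x ^ i‖ ≤ max ‖(1 : A)‖ 1 * ‖x‖ ^ i := by
  rcases i.eq_zero_or_pos with rfl | hi
  · simp
  · exact (norm_pow_le' x hi).trans (le_mul_of_one_le_left (by positivity) (le_max_right _ _))

theorem summable_inv_factorial_mul_natCast_mul_pow_pred (r : ℝ) :
    Summable fun k : ℕ => (k ! : ℝ)⁻¹ * (k * r ^ (k - 1)) := by
  refine (summable_nat_add_iff 1).1 ((Real.summable_pow_div_factorial r).congr fun k => ?_)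
  push_cast [Nat.factorial_succ]
  field_simp

section NormedAlgebra

variable {𝕂 A : Type*} [RCLike 𝕂] [NormedRing A] [NormedAlgebra 𝕂 A]

variable (𝕂) in
noncomputable def fderivPow (x : A) (k : ℕ) : A →L[𝕂] A :=
  ∑ i ∈ range k, mulLeftRight 𝕂 A (x ^ i) (x ^ (k - 1 - i))

theorem hasFDerivAt_pow_fderivPow (x : A) (k : ℕ) :
    HasFDerivAt (fun y : A => y ^ k) (fderivPow 𝕂 x k) x := by
  refine (hasFDerivAt_pow' k).congr_fderiv (ContinuousLinearMap.ext fun h => ?_)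
  rw [fderivPow, ← sum_range_reflect]
  simp only [FunLike.coe_sum, Finset.sum_apply, mulLeftRight_apply]
  refine sum_congr rfl fun i hi => ?_
  have hik := mem_range.mp hi
  simp [show k - 1 - (k - 1 - i) = i by omega]

theorem norm_fderivPow_le (x : A) (k : ℕ) :
    ‖fderivPow 𝕂 x k‖ ≤ k * (max ‖(1 : A)‖ 1 ^ 2 * ‖x‖ ^ (k - 1)) := by
  set C := max ‖(1 : A)‖ 1
  calc ‖fderivPow 𝕂 x k‖
      ≤ ∑ i ∈ range k, ‖x ^ i‖ * ‖x ^ (k - 1 - i)‖ :=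
        (norm_sum_le _ _).trans (sum_le_sum fun i _ => opNorm_mulLeftRight_apply_apply_le ..)
    _ ≤ ∑ i ∈ range k, C ^ 2 * ‖x‖ ^ (k - 1) := by
        refine sum_le_sum fun i hi => ?_
        have hik := mem_range.mp hi
        calc ‖x ^ i‖ * ‖x ^ (k - 1 - i)‖ ≤ (C * ‖x‖ ^ i) * (C * ‖x‖ ^ (k - 1 - i)) :=
              mul_le_mul (norm_pow_le_max_norm_one_mul x i) (norm_pow_le_max_norm_one_mul _ _)
                (norm_nonneg _) (by positivity)
          _ = C ^ 2 * ‖x‖ ^ (k - 1) := by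
              rw [mul_mul_mul_comm, ← pow_add, Nat.add_sub_cancel' (by omega), sq]
    _ = k * (C ^ 2 * ‖x‖ ^ (k - 1)) := by simp

theorem norm_inv_factorial_smul_fderivPow_le {x : A} {r : ℝ} (hx : ‖x‖ ≤ r) (k : ℕ) :
    ‖(k !⁻¹ : 𝕂) • fderivPow 𝕂 x k‖ ≤
      max ‖(1 : A)‖ 1 ^ 2 * ((k ! : ℝ)⁻¹ * (k * r ^ (k - 1))) :=
  calc ‖(k !⁻¹ : 𝕂) • fderivPow 𝕂 x k‖ = (k ! : ℝ)⁻¹ * ‖fderivPow 𝕂 x k‖ := by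
        rw [norm_smul, norm_inv, RCLike.norm_natCast]
    _ ≤ (k ! : ℝ)⁻¹ * (k * (max ‖(1 : A)‖ 1 ^ 2 * r ^ (k - 1))) := by
        gcongr; exact (norm_fderivPow_le (𝕂 := 𝕂) x k).trans (by gcongr)
    _ = _ := by ring

variable [CompleteSpace A]

theorem summable_inv_factorial_smul_fderivPow (x : A) :
    Summable fun k : ℕ => (k !⁻¹ : 𝕂) • fderivPow 𝕂 x k :=
  ((summable_inv_factorial_mul_natCast_mul_pow_pred ‖x‖).mul_left _).of_norm_bounded
    (norm_inv_factorial_smul_fderivPow_le le_rfl)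

theorem hasFDerivAt_exp_tsum_fderivPow (x : A) :
    HasFDerivAt exp (∑' k : ℕ, (k !⁻¹ : 𝕂) • fderivPow 𝕂 x k) x := by
  set r := ‖x‖ + 1
  have hx : x ∈ Metric.ball (0 : A) r := by simp [r]
  have hderiv : ∀ (k : ℕ), ∀ y ∈ Metric.ball (0 : A) r,
      HasFDerivAt (fun y : A => (k !⁻¹ : 𝕂) • y ^ k) ((k !⁻¹ : 𝕂) • fderivPow 𝕂 y k) y :=
    fun k y _ => (hasFDerivAt_pow_fderivPow y k).fun_const_smul _
  have hbound : ∀ (k : ℕ), ∀ y ∈ Metric.ball (0 : A) r, ‖(k !⁻¹ : 𝕂) • fderivPow 𝕂 y k‖ ≤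
      max ‖(1 : A)‖ 1 ^ 2 * ((k ! : ℝ)⁻¹ * (k * r ^ (k - 1))) :=
    fun k y hy => norm_inv_factorial_smul_fderivPow_le (mem_ball_zero_iff.1 hy).le k
  -- `convex_ball` needs a real normed-space structure
  let := NormedSpace.restrictScalars ℝ 𝕂 A
  rw [exp_eq_tsum 𝕂]
  exact hasFDerivAt_tsum_of_isPreconnected
    ((summable_inv_factorial_mul_natCast_mul_pow_pred r).mul_left _) Metric.isOpen_ball
    (convex_ball _ _).isPreconnected hderiv hbound hx (expSeries_summable' x) hx

end NormedAlgebra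

theorem hasSum_dslope_exp {𝕂 : Type*} [RCLike 𝕂] (x y : 𝕂) :
    HasSum (fun k : ℕ => (k !⁻¹ : 𝕂) * ∑ i ∈ range k, x ^ i * y ^ (k - 1 - i))
      (dslope exp y x) := by
  rcases eq_or_ne x y with rfl | hxy
  · rw [dslope_same, hasDerivAt_exp.deriv]
    refine (hasSum_nat_add_iff' 1).1 ?_
    rw [sum_range_one, sum_range_zero, mul_zero, sub_zero]
    have hterm : (fun n : ℕ => ((n + 1)! : 𝕂)⁻¹ * ∑ i ∈ range (n + 1), x ^ i * x ^ (n + 1 - 1 - i))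
        = fun n => (n ! : 𝕂)⁻¹ • x ^ n := by
      ext n
      rw [geom_sum₂_self, Nat.add_sub_cancel, Nat.factorial_succ, smul_eq_mul]
      push_cast
      field_simp
    rw [hterm]
    exact exp_series_hasSum_exp' x
  · rw [dslope_of_ne _ hxy, slope_def_field]
    simp_rw [(Commute.all x y).geom_sum₂ hxy, ← mul_div_assoc, mul_sub]
    simpa only [smul_eq_mul] using
      ((exp_series_hasSum_exp' (𝕂 := 𝕂) x).sub (exp_series_hasSum_exp' (𝕂 := 𝕂) y)).div_const _

section Matrix

variable {ι 𝕂 : Type*} [Fintype ι] [DecidableEq ι] [RCLike 𝕂]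

attribute [local instance] Matrix.frobeniusNormedRing Matrix.frobeniusNormedAlgebra

theorem Matrix.fderivPow_diagonal_apply (d : ι → 𝕂) (k : ℕ) (h : Matrix ι ι 𝕂) (a b : ι) :
    fderivPow 𝕂 (diagonal d) k h a b = (∑ i ∈ range k, d a ^ i * d b ^ (k - 1 - i)) * h a b := by
  simp only [fderivPow, FunLike.coe_sum, Finset.sum_apply, mulLeftRight_apply, Matrix.sum_apply,
    diagonal_pow, diagonal_mul, mul_diagonal, sum_mul]
  exact sum_congr rfl fun i _ => by simp only [Pi.pow_apply]; ring

theorem Matrix.tsum_fderivPow_diagonal_apply (d : ι → 𝕂) (h : Matrix ι ι 𝕂) (a b : ι) :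
    (∑' k : ℕ, (k !⁻¹ : 𝕂) • fderivPow 𝕂 (diagonal d) k) h a b =
      dslope exp (d b) (d a) * h a b := by
  have hsum := (summable_inv_factorial_smul_fderivPow (𝕂 := 𝕂) (diagonal d)).hasSum
  refine (Pi.hasSum.1 (Pi.hasSum.1 (hsum.mapL (apply 𝕂 _ h)) a) b).unique ?_
  simpa [fderivPow_diagonal_apply, mul_assoc] using
    (hasSum_dslope_exp (d a) (d b)).mul_right (h a b)

end Matrix

/-- let `λ₁, …, λₙ` be real numbers and `s = diag(λ₁, …, λₙ)` in `M_n(ℂ)`.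
Then the matrix exponential is Fréchet differentiable at `s`, and its derivative at `s`
applied to a direction `h` is the matrix with `(a, b)`-entry
`h a b * (e^(λ a) - e^(λ b))/(λ a - λ b)` when `λ a ≠ λ b`, and `e^(λ a) * h a b`
when `λ a = λ b`. -/
theorem hasFDerivAt_exp_diagonal {n : ℕ} (lam : Fin n → ℝ)
    (s : Matrix (Fin n) (Fin n) ℂ) (hsd : s = Matrix.diagonal fun a => (lam a : ℂ)) :
    ∃ D : Matrix (Fin n) (Fin n) ℂ →L[ℂ] Matrix (Fin n) (Fin n) ℂ,
      HasFDerivAt NormedSpace.exp D s ∧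
      ∀ (h : Matrix (Fin n) (Fin n) ℂ) (a b : Fin n),
        D h a b =
          if lam a = lam b then Complex.exp (lam a) * h a b
          else h a b * ((Complex.exp (lam a) - Complex.exp (lam b)) / ((lam a : ℂ) - lam b)) := by
  let : NormedRing (Matrix (Fin n) (Fin n) ℂ) := Matrix.frobeniusNormedRing
  let : NormedAlgebra ℂ (Matrix (Fin n) (Fin n) ℂ) := Matrix.frobeniusNormedAlgebra
  subst hsd
  refine ⟨_, hasFDerivAt_exp_tsum_fderivPow (𝕂 := ℂ) _, fun h a b => ?_⟩
  refine (Matrix.tsum_fderivPow_diagonal_apply _ h a b).trans ?_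
  rw [Complex.exp_eq_exp_ℂ]
  rcases eq_or_ne (lam a) (lam b) with hab | hab
  · rw [if_pos hab, hab, dslope_same, hasDerivAt_exp.deriv]
  · rw [if_neg hab, dslope_of_ne _ (by exact_mod_cast hab), slope_def_field, mul_comm]
end
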